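/- Let P be a transition matrix on 𝒳. For every α > 1: η̃^{(D_α)}(P) ≤ η̃^{(R_α)}(P) ≤ 1 and η^{(D_α)}(P) ≤ η^{(R_α)}(P) ≤ 1. For every β ∈ (0,1): η̃^{(R_β)}(P) ≤ η̃^{(D_β)}(P) and η^{(R_β)}(P) ≤ η^{(D_β)}(P). -/

import Mathlib

open Finset
open scoped ENNReal

/-- A transition matrix on a finite state space `X`: nonnegative entries, rows sum to one. -/
def IsTransMat {X : Type*} [Fintype X] (M : X → X → ℝ) : Prop :=
  (∀ x y, 0 ≤ M x y) ∧ ∀ x, ∑ y, M x y = 1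

/-- A probability mass function on a finite state space `X`. -/
def IsProb {X : Type*} [Fintype X] (μ : X → ℝ) : Prop :=
  (∀ x, 0 ≤ μ x) ∧ ∑ x, μ x = 1

/-- The inner sum of the extended-real-valued π-weighted α-divergence. -/
noncomputable def DalphaSumE {X : Type*} [Fintype X] (π : X → ℝ) (α : ℝ)
    (M L : X → X → ℝ) : ℝ≥0∞ :=
  ∑ x, ∑ y,
    if L x y = 0 then (if M x y = 0 then 0 else if 1 < α then ⊤ else 0)
    else ENNReal.ofReal (π x * L x y * (M x y / L x y) ^ α)

/-- The extended-real-valued π-weighted α-divergence. -/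
noncomputable def DalphaE {X : Type*} [Fintype X] (π : X → ℝ) (α : ℝ)
    (M L : X → X → ℝ) : EReal :=
  ((1 / (α - 1) : ℝ) : EReal) * ((DalphaSumE π α M L : EReal) - 1)

/-- The extended-real-valued π-weighted Rényi divergence. -/
noncomputable def RalphaE {X : Type*} [Fintype X] (π : X → ℝ) (α : ℝ)
    (M L : X → X → ℝ) : EReal :=
  if DalphaE π α M L = ⊤ then ⊤
  else (((1 / (α - 1)) * Real.log (1 + (α - 1) * (DalphaE π α M L).toReal) : ℝ) : EReal)

/-- The inner sum of the extended-real-valued α-divergence of probability measures. -/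
noncomputable def DtalphaSumE {X : Type*} [Fintype X] (α : ℝ) (μ ν : X → ℝ) : ℝ≥0∞ :=
  ∑ x,
    if ν x = 0 then (if μ x = 0 then 0 else if 1 < α then ⊤ else 0)
    else ENNReal.ofReal (ν x * (μ x / ν x) ^ α)

/-- The extended-real-valued α-divergence of probability measures. -/
noncomputable def DtalphaE {X : Type*} [Fintype X] (α : ℝ) (μ ν : X → ℝ) : EReal :=
  ((1 / (α - 1) : ℝ) : EReal) * ((DtalphaSumE α μ ν : EReal) - 1)

/-- The extended-real-valued Rényi divergence of probability measures. -/
noncomputable def RtalphaE {X : Type*} [Fintype X] (α : ℝ) (μ ν : X → ℝ) : EReal :=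
  if DtalphaE α μ ν = ⊤ then ⊤
  else (((1 / (α - 1)) * Real.log (1 + (α - 1) * (DtalphaE α μ ν).toReal) : ℝ) : EReal)

/-- Right action of a transition matrix on a transition matrix. -/
def matMul {X : Type*} [Fintype X] (M P : X → X → ℝ) : X → X → ℝ :=
  fun x y => ∑ z, M x z * P z y

/-- Right action of a transition matrix on a probability measure. -/
def vecMul {X : Type*} [Fintype X] (μ : X → ℝ) (P : X → X → ℝ) : X → ℝ :=
  fun y => ∑ x, μ x * P x y

/-- The α-divergence ergodicity coefficient on the space of transition matrices. -/
noncomputable def etaD {X : Type*} [Fintype X] (π : X → ℝ) (α : ℝ)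
    (P : X → X → ℝ) : EReal :=
  sSup {r : EReal | ∃ M L : X → X → ℝ, IsTransMat M ∧ IsTransMat L ∧ M ≠ L ∧
    0 < DalphaE π α M L ∧ DalphaE π α M L ≠ ⊤ ∧
    r = DalphaE π α (matMul M P) (matMul L P) *
      ((((DalphaE π α M L).toReal)⁻¹ : ℝ) : EReal)}

/-- The Rényi ergodicity coefficient on the space of transition matrices. -/
noncomputable def etaR {X : Type*} [Fintype X] (π : X → ℝ) (α : ℝ)
    (P : X → X → ℝ) : EReal :=
  sSup {r : EReal | ∃ M L : X → X → ℝ, IsTransMat M ∧ IsTransMat L ∧ M ≠ L ∧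
    0 < RalphaE π α M L ∧ RalphaE π α M L ≠ ⊤ ∧
    r = RalphaE π α (matMul M P) (matMul L P) *
      ((((RalphaE π α M L).toReal)⁻¹ : ℝ) : EReal)}

/-- The α-divergence ergodicity coefficient on the space of probability measures. -/
noncomputable def etaTD {X : Type*} [Fintype X] (α : ℝ) (P : X → X → ℝ) : EReal :=
  sSup {r : EReal | ∃ μ ν : X → ℝ, IsProb μ ∧ IsProb ν ∧ μ ≠ ν ∧
    0 < DtalphaE α μ ν ∧ DtalphaE α μ ν ≠ ⊤ ∧
    r = DtalphaE α (vecMul μ P) (vecMul ν P) *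
      ((((DtalphaE α μ ν).toReal)⁻¹ : ℝ) : EReal)}

/-- The Rényi ergodicity coefficient on the space of probability measures. -/
noncomputable def etaTR {X : Type*} [Fintype X] (α : ℝ) (P : X → X → ℝ) : EReal :=
  sSup {r : EReal | ∃ μ ν : X → ℝ, IsProb μ ∧ IsProb ν ∧ μ ≠ ν ∧
    0 < RtalphaE α μ ν ∧ RtalphaE α μ ν ≠ ⊤ ∧
    r = RtalphaE α (vecMul μ P) (vecMul ν P) *
      ((((RtalphaE α μ ν).toReal)⁻¹ : ℝ) : EReal)}

/-!
Whenever `D̃_α(μ‖ν)` is finite, both divergences are functions of the Hellinger sum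
`H = ∑ ν (μ / ν) ^ α`: `D̃_α = (H - 1) / (α - 1)` and `R̃_α = log H / (α - 1)`. Hence the two
contraction ratios are `(H' - 1) / (H - 1)` and `log H' / log H`, where `H'` is the Hellinger sum
after applying `P`. Jensen's inequality for the perspective of `t ↦ t ^ α` shows that `P` moves
`H` towards `1` (`1 ≤ H' ≤ H` for `α > 1`, `H ≤ H' ≤ 1` for `α < 1`), and concavity of `log`
compares the two ratios. The transition-matrix case reduces to the vector case through the joint
laws `π x * M x y` on `X × X`, on which `M ↦ M P` acts as the transition matrix `P` on the
second coordinate.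
-/

section

open Real

section Perspective

variable {ι : Type*} {s : Finset ι} {a b : ι → ℝ}

lemma mul_mul_div_mul_rpow {c m n : ℝ} (hc : 0 ≤ c) (α : ℝ) :
    n * c * (m * c / (n * c)) ^ α = c * (n * (m / n) ^ α) := by
  rcases hc.eq_or_lt with rfl | hc
  · simp
  · rw [mul_div_mul_right _ _ hc.ne']; ring

lemma rpow_perspective_sum_le {α : ℝ} (hα : 1 ≤ α) (ha : ∀ i ∈ s, 0 ≤ a i)
    (hb : ∀ i ∈ s, 0 ≤ b i) (hac : ∀ i ∈ s, b i = 0 → a i = 0) :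
    (∑ i ∈ s, b i) * ((∑ i ∈ s, a i) / ∑ i ∈ s, b i) ^ α ≤ ∑ i ∈ s, b i * (a i / b i) ^ α := by
  obtain hB | hB := (sum_nonneg hb).eq_or_lt
  · rw [← hB, zero_mul]
    exact sum_nonneg fun i hi =>
      mul_nonneg (hb i hi) (rpow_nonneg (div_nonneg (ha i hi) (hb i hi)) _)
  set B := ∑ i ∈ s, b i
  have hB' : B ≠ 0 := hB.ne'
  have hmean : ∑ i ∈ s, (b i / B) • (a i / b i) = (∑ i ∈ s, a i) / B := by
    rw [sum_div]
    refine sum_congr rfl fun i hi => ?_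
    rcases eq_or_ne (b i) 0 with h | h
    · simp [h, hac i hi h]
    · rw [smul_eq_mul]; field_simp
  have hJensen := (convexOn_rpow hα).map_sum_le (fun i hi => div_nonneg (hb i hi) hB.le)
    (by rw [← sum_div, div_self hB']) (fun i hi => div_nonneg (ha i hi) (hb i hi))
  rw [hmean] at hJensen
  calc B * ((∑ i ∈ s, a i) / B) ^ α ≤ B * ∑ i ∈ s, (b i / B) • (a i / b i) ^ α := by
        gcongr
    _ = ∑ i ∈ s, b i * (a i / b i) ^ α := by
        rw [mul_sum]; refine sum_congr rfl fun i _ => ?_; rw [smul_eq_mul]; field_simp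

lemma sum_rpow_perspective_le {β : ℝ} (hβ₀ : 0 ≤ β) (hβ₁ : β ≤ 1) (ha : ∀ i ∈ s, 0 ≤ a i)
    (hb : ∀ i ∈ s, 0 ≤ b i) :
    ∑ i ∈ s, b i * (a i / b i) ^ β ≤ (∑ i ∈ s, b i) * ((∑ i ∈ s, a i) / ∑ i ∈ s, b i) ^ β := by
  obtain hB | hB := (sum_nonneg hb).eq_or_lt
  · have hb0 := (sum_eq_zero_iff_of_nonneg hb).1 hB.symm
    rw [sum_eq_zero fun i hi => by simp [hb0 i hi], ← hB, zero_mul]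
  set B := ∑ i ∈ s, b i
  have hB' : B ≠ 0 := hB.ne'
  have hmean : ∑ i ∈ s, (b i / B) • (a i / b i) ≤ (∑ i ∈ s, a i) / B := by
    rw [sum_div]
    refine sum_le_sum fun i hi => ?_
    rcases eq_or_ne (b i) 0 with h | h
    · simpa [h] using div_nonneg (ha i hi) hB.le
    · exact le_of_eq (by rw [smul_eq_mul]; field_simp)
  have hJensen := (concaveOn_rpow hβ₀ hβ₁).le_map_sum (fun i hi => div_nonneg (hb i hi) hB.le)
    (by rw [← sum_div, div_self hB']) (fun i hi => div_nonneg (ha i hi) (hb i hi))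
  calc ∑ i ∈ s, b i * (a i / b i) ^ β = B * ∑ i ∈ s, (b i / B) • (a i / b i) ^ β := by
        rw [mul_sum]; refine sum_congr rfl fun i _ => ?_; rw [smul_eq_mul]; field_simp
    _ ≤ B * (∑ i ∈ s, (b i / B) • (a i / b i)) ^ β := by gcongr
    _ ≤ B * ((∑ i ∈ s, a i) / B) ^ β := by
        gcongr
        exact sum_nonneg fun i hi => smul_nonneg (div_nonneg (hb i hi) hB.le)
          (div_nonneg (ha i hi) (hb i hi))

end Perspective

lemma mul_log_le_log_mul_add_one_sub {s t : ℝ} (hs : 0 < s) (ht₀ : 0 ≤ t) (ht₁ : t ≤ 1) :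
    t * log s ≤ log (t * s + (1 - t)) := by
  simpa using strictConcaveOn_log_Ioi.concaveOn.2 hs (Set.mem_Ioi.2 one_pos) ht₀
    (sub_nonneg.2 ht₁) (add_sub_cancel t 1)

lemma sub_one_div_sub_one_le_log_div_log {s t : ℝ} (ht : 1 ≤ t) (hts : t ≤ s) (hs : 1 < s) :
    (t - 1) / (s - 1) ≤ log t / log s := by
  have h := mul_log_le_log_mul_add_one_sub (t := (t - 1) / (s - 1)) (by linarith)
    (div_nonneg (by linarith) (by linarith)) ((div_le_one (by linarith)).2 (by linarith))
  have hs' : s - 1 ≠ 0 := (sub_pos.2 hs).ne'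
  rwa [show (t - 1) / (s - 1) * s + (1 - (t - 1) / (s - 1)) = t by field_simp; ring,
    ← le_div_iff₀ (log_pos hs)] at h

lemma log_div_log_le_sub_one_div_sub_one {s t : ℝ} (hs : 0 < s) (hst : s ≤ t) (ht : t ≤ 1)
    (hs₁ : s < 1) : log t / log s ≤ (t - 1) / (s - 1) := by
  have hw : (t - 1) / (s - 1) = (1 - t) / (1 - s) := by
    rw [← neg_sub 1 t, ← neg_sub 1 s, neg_div_neg_eq]
  have h := mul_log_le_log_mul_add_one_sub (t := (t - 1) / (s - 1)) hs
    (by rw [hw]; exact div_nonneg (by linarith) (by linarith))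
    (by rw [hw]; exact (div_le_one (by linarith)).2 (by linarith))
  have hs' : s - 1 ≠ 0 := (sub_neg.2 hs₁).ne
  rwa [show (t - 1) / (s - 1) * s + (1 - (t - 1) / (s - 1)) = t by field_simp; ring,
    ← div_le_iff_of_neg (log_neg hs hs₁)] at h

section Hellinger

variable {X : Type*} [Fintype X] {α : ℝ} {μ ν : X → ℝ} {P : X → X → ℝ}

noncomputable def hellingerSum (α : ℝ) (μ ν : X → ℝ) : ℝ := ∑ x, ν x * (μ x / ν x) ^ α

lemma hellingerSum_nonneg (hμ : ∀ x, 0 ≤ μ x) (hν : ∀ x, 0 ≤ ν x) : 0 ≤ hellingerSum α μ ν :=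
  sum_nonneg fun x _ => mul_nonneg (hν x) (rpow_nonneg (div_nonneg (hμ x) (hν x)) α)

lemma hellingerSum_eq_sum_sum_mul (hP : IsTransMat P) (α : ℝ) (μ ν : X → ℝ) :
    hellingerSum α μ ν = ∑ y, ∑ x, ν x * P x y * (μ x * P x y / (ν x * P x y)) ^ α := by
  rw [sum_comm]
  refine sum_congr rfl fun x _ => ?_
  simp_rw [mul_mul_div_mul_rpow (hP.1 x _)]
  rw [← sum_mul, hP.2 x, one_mul]

lemma hellingerSum_vecMul_le (hα : 1 ≤ α) (hμ : ∀ x, 0 ≤ μ x) (hν : ∀ x, 0 ≤ ν x)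
    (hac : ∀ x, ν x = 0 → μ x = 0) (hP : IsTransMat P) :
    hellingerSum α (vecMul μ P) (vecMul ν P) ≤ hellingerSum α μ ν := by
  rw [hellingerSum_eq_sum_sum_mul hP α μ ν]
  refine sum_le_sum fun y _ => rpow_perspective_sum_le hα (fun x _ => mul_nonneg (hμ x) (hP.1 x y))
    (fun x _ => mul_nonneg (hν x) (hP.1 x y)) fun x _ h => ?_
  rcases mul_eq_zero.1 h with h | h <;> simp [h, hac]

lemma hellingerSum_le_hellingerSum_vecMul {β : ℝ} (hβ₀ : 0 ≤ β) (hβ₁ : β ≤ 1)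
    (hμ : ∀ x, 0 ≤ μ x) (hν : ∀ x, 0 ≤ ν x) (hP : IsTransMat P) :
    hellingerSum β μ ν ≤ hellingerSum β (vecMul μ P) (vecMul ν P) := by
  rw [hellingerSum_eq_sum_sum_mul hP β μ ν]
  exact sum_le_sum fun y _ => sum_rpow_perspective_le hβ₀ hβ₁
    (fun x _ => mul_nonneg (hμ x) (hP.1 x y)) (fun x _ => mul_nonneg (hν x) (hP.1 x y))

lemma one_le_hellingerSum (hα : 1 ≤ α) (hμ : IsProb μ) (hν : IsProb ν)
    (hac : ∀ x, ν x = 0 → μ x = 0) : 1 ≤ hellingerSum α μ ν := by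
  simpa [hellingerSum, hμ.2, hν.2] using
    rpow_perspective_sum_le hα (s := univ) (fun x _ => hμ.1 x) (fun x _ => hν.1 x) fun x _ => hac x

lemma hellingerSum_le_one {β : ℝ} (hβ₀ : 0 ≤ β) (hβ₁ : β ≤ 1) (hμ : IsProb μ) (hν : IsProb ν) :
    hellingerSum β μ ν ≤ 1 := by
  simpa [hellingerSum, hμ.2, hν.2] using
    sum_rpow_perspective_le hβ₀ hβ₁ (s := univ) (fun x _ => hμ.1 x) (fun x _ => hν.1 x)

lemma vecMul_nonneg (hμ : ∀ x, 0 ≤ μ x) (hP : IsTransMat P) (y : X) : 0 ≤ vecMul μ P y :=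
  sum_nonneg fun x _ => mul_nonneg (hμ x) (hP.1 x y)

lemma IsProb.vecMul (hμ : IsProb μ) (hP : IsTransMat P) : IsProb (vecMul μ P) := by
  refine ⟨vecMul_nonneg hμ.1 hP, ?_⟩
  change ∑ y, ∑ x, μ x * P x y = 1
  rw [sum_comm]
  simp_rw [← mul_sum, hP.2, mul_one, hμ.2]

lemma vecMul_eq_zero_of_vecMul_eq_zero (hν : ∀ x, 0 ≤ ν x) (hP : IsTransMat P)
    (hac : ∀ x, ν x = 0 → μ x = 0) {y : X} (hy : vecMul ν P y = 0) : vecMul μ P y = 0 := by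
  have hz := (sum_eq_zero_iff_of_nonneg fun x _ => mul_nonneg (hν x) (hP.1 x y)).1 hy
  refine sum_eq_zero fun x hx => ?_
  rcases mul_eq_zero.1 (hz x hx) with h | h <;> simp [h, hac]

end Hellinger

section Divergence

variable {X : Type*} [Fintype X] {α : ℝ} {μ ν : X → ℝ} {P : X → X → ℝ}

lemma dtalphaSumE_eq_ofReal (hμ : ∀ x, 0 ≤ μ x) (hν : ∀ x, 0 ≤ ν x)
    (hfin : α ≤ 1 ∨ ∀ x, ν x = 0 → μ x = 0) :
    DtalphaSumE α μ ν = ENNReal.ofReal (hellingerSum α μ ν) := by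
  rw [hellingerSum, ENNReal.ofReal_sum_of_nonneg fun x _ =>
    mul_nonneg (hν x) (rpow_nonneg (div_nonneg (hμ x) (hν x)) α)]
  refine sum_congr rfl fun x _ => ?_
  by_cases hx : ν x = 0
  · rcases hfin with h | h
    · simp [hx, not_lt.2 h]
    · simp [hx, h x hx]
  · rw [if_neg hx]

lemma dtalphaE_eq_coe (hμ : ∀ x, 0 ≤ μ x) (hν : ∀ x, 0 ≤ ν x)
    (hfin : α ≤ 1 ∨ ∀ x, ν x = 0 → μ x = 0) :
    DtalphaE α μ ν = ((1 / (α - 1) * (hellingerSum α μ ν - 1) : ℝ) : EReal) := by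
  rw [DtalphaE, dtalphaSumE_eq_ofReal hμ hν hfin, EReal.coe_ennreal_ofReal,
    max_eq_left (hellingerSum_nonneg hμ hν), ← EReal.coe_one, ← EReal.coe_sub, ← EReal.coe_mul]

lemma rtalphaE_eq_coe (hα : α ≠ 1) (hμ : ∀ x, 0 ≤ μ x) (hν : ∀ x, 0 ≤ ν x)
    (hfin : α ≤ 1 ∨ ∀ x, ν x = 0 → μ x = 0) :
    RtalphaE α μ ν = ((1 / (α - 1) * log (hellingerSum α μ ν) : ℝ) : EReal) := by
  have hα' : α - 1 ≠ 0 := sub_ne_zero.2 hα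
  rw [RtalphaE, dtalphaE_eq_coe hμ hν hfin, if_neg (EReal.coe_ne_top _), EReal.toReal_coe]
  congr 3
  field_simp
  ring

lemma ac_of_dtalphaE_ne_top (hα : 1 < α) (h : DtalphaE α μ ν ≠ ⊤) (x : X) (hx : ν x = 0) :
    μ x = 0 := by
  by_contra hμx
  apply h
  have hsum : DtalphaSumE α μ ν = ⊤ :=
    ENNReal.sum_eq_top.2 ⟨x, mem_univ x, by rw [if_pos hx, if_neg hμx, if_pos hα]⟩
  rw [DtalphaE, hsum, EReal.coe_ennreal_top, ← EReal.coe_one, EReal.top_sub_coe]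
  exact EReal.coe_mul_top_of_pos (one_div_pos.2 (sub_pos.2 hα))

noncomputable def divRatio (a b : EReal) : EReal := a * ((b.toReal⁻¹ : ℝ) : EReal)

lemma divRatio_coe_mul {c x y : ℝ} (hc : c ≠ 0) :
    divRatio ((c * x : ℝ) : EReal) ((c * y : ℝ) : EReal) = ((x / y : ℝ) : EReal) := by
  rw [divRatio, EReal.toReal_coe, ← EReal.coe_mul, mul_inv, mul_mul_mul_comm,
    mul_inv_cancel₀ hc, one_mul, div_eq_mul_inv]

lemma divRatio_dtalphaE_vecMul (hμ : ∀ x, 0 ≤ μ x) (hν : ∀ x, 0 ≤ ν x) (hP : IsTransMat P)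
    (hα : α ≠ 1) (hfin : α ≤ 1 ∨ ∀ x, ν x = 0 → μ x = 0) :
    divRatio (DtalphaE α (vecMul μ P) (vecMul ν P)) (DtalphaE α μ ν) =
      (((hellingerSum α (vecMul μ P) (vecMul ν P) - 1) / (hellingerSum α μ ν - 1) : ℝ) :
        EReal) := by
  rw [dtalphaE_eq_coe hμ hν hfin, dtalphaE_eq_coe (vecMul_nonneg hμ hP) (vecMul_nonneg hν hP)
    (hfin.imp_right fun hac _ => vecMul_eq_zero_of_vecMul_eq_zero hν hP hac),
    divRatio_coe_mul (one_div_ne_zero (sub_ne_zero.2 hα))]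

lemma divRatio_rtalphaE_vecMul (hμ : ∀ x, 0 ≤ μ x) (hν : ∀ x, 0 ≤ ν x) (hP : IsTransMat P)
    (hα : α ≠ 1) (hfin : α ≤ 1 ∨ ∀ x, ν x = 0 → μ x = 0) :
    divRatio (RtalphaE α (vecMul μ P) (vecMul ν P)) (RtalphaE α μ ν) =
      ((log (hellingerSum α (vecMul μ P) (vecMul ν P)) / log (hellingerSum α μ ν) : ℝ) :
        EReal) := by
  rw [rtalphaE_eq_coe hα hμ hν hfin, rtalphaE_eq_coe hα (vecMul_nonneg hμ hP)
    (vecMul_nonneg hν hP) (hfin.imp_right fun hac _ => vecMul_eq_zero_of_vecMul_eq_zero hν hP hac),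
    divRatio_coe_mul (one_div_ne_zero (sub_ne_zero.2 hα))]

end Divergence

section ContractionCoeff

variable {ι : Type*} {p : ι → Prop} {D D' : ι → ι → EReal} {T : ι → ι}

noncomputable def contractionCoeff (p : ι → Prop) (D : ι → ι → EReal) (T : ι → ι) : EReal :=
  sSup {r : EReal | ∃ a b, p a ∧ p b ∧ a ≠ b ∧ 0 < D a b ∧ D a b ≠ ⊤ ∧
    r = divRatio (D (T a) (T b)) (D a b)}

lemma contractionCoeff_le_contractionCoeff
    (h : ∀ a b, p a → p b → 0 < D a b → D a b ≠ ⊤ → 0 < D' a b ∧ D' a b ≠ ⊤ ∧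
      divRatio (D (T a) (T b)) (D a b) ≤ divRatio (D' (T a) (T b)) (D' a b)) :
    contractionCoeff p D T ≤ contractionCoeff p D' T := by
  refine sSup_le_sSup_of_isCofinalFor ?_
  rintro _ ⟨a, b, ha, hb, hab, h0, htop, rfl⟩
  obtain ⟨h0', htop', hle⟩ := h a b ha hb h0 htop
  exact ⟨_, ⟨a, b, ha, hb, hab, h0', htop', rfl⟩, hle⟩

lemma contractionCoeff_le_one
    (h : ∀ a b, p a → p b → 0 < D a b → D a b ≠ ⊤ → divRatio (D (T a) (T b)) (D a b) ≤ 1) :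
    contractionCoeff p D T ≤ 1 :=
  sSup_le fun _ ⟨a, b, ha, hb, _, h0, htop, hr⟩ => hr ▸ h a b ha hb h0 htop

end ContractionCoeff

section Contraction

variable {X : Type*} [Fintype X] {μ ν : X → ℝ} {P : X → X → ℝ}

theorem divRatio_dtalphaE_vecMul_le_divRatio_rtalphaE_vecMul {α : ℝ} (hα : 1 < α)
    (hP : IsTransMat P) (hμ : IsProb μ) (hν : IsProb ν) (h0 : 0 < DtalphaE α μ ν)
    (htop : DtalphaE α μ ν ≠ ⊤) :
    0 < RtalphaE α μ ν ∧ RtalphaE α μ ν ≠ ⊤ ∧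
      divRatio (DtalphaE α (vecMul μ P) (vecMul ν P)) (DtalphaE α μ ν) ≤
        divRatio (RtalphaE α (vecMul μ P) (vecMul ν P)) (RtalphaE α μ ν) := by
  have hac := ac_of_dtalphaE_ne_top hα htop
  rw [dtalphaE_eq_coe hμ.1 hν.1 (.inr hac), EReal.coe_pos] at h0
  rw [divRatio_dtalphaE_vecMul hμ.1 hν.1 hP hα.ne' (.inr hac),
    divRatio_rtalphaE_vecMul hμ.1 hν.1 hP hα.ne' (.inr hac),
    rtalphaE_eq_coe hα.ne' hμ.1 hν.1 (.inr hac), EReal.coe_pos, EReal.coe_le_coe_iff]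
  have hc : 0 < 1 / (α - 1) := one_div_pos.2 (sub_pos.2 hα)
  have hS : 1 < hellingerSum α μ ν := sub_pos.1 (pos_of_mul_pos_right h0 hc.le)
  have hS' := one_le_hellingerSum hα.le (hμ.vecMul hP) (hν.vecMul hP)
    fun _ => vecMul_eq_zero_of_vecMul_eq_zero hν.1 hP hac
  exact ⟨mul_pos hc (log_pos hS), EReal.coe_ne_top _, sub_one_div_sub_one_le_log_div_log hS'
    (hellingerSum_vecMul_le hα.le hμ.1 hν.1 hac hP) hS⟩

theorem divRatio_rtalphaE_vecMul_le_one {α : ℝ} (hα : 1 < α) (hP : IsTransMat P)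
    (hμ : IsProb μ) (hν : IsProb ν) (h0 : 0 < RtalphaE α μ ν) (htop : RtalphaE α μ ν ≠ ⊤) :
    divRatio (RtalphaE α (vecMul μ P) (vecMul ν P)) (RtalphaE α μ ν) ≤ 1 := by
  have hac := ac_of_dtalphaE_ne_top hα fun h => htop (by rw [RtalphaE, if_pos h])
  rw [rtalphaE_eq_coe hα.ne' hμ.1 hν.1 (.inr hac), EReal.coe_pos] at h0
  rw [divRatio_rtalphaE_vecMul hμ.1 hν.1 hP hα.ne' (.inr hac), ← EReal.coe_one,
    EReal.coe_le_coe_iff]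
  have hS' := one_le_hellingerSum hα.le (hμ.vecMul hP) (hν.vecMul hP)
    fun _ => vecMul_eq_zero_of_vecMul_eq_zero hν.1 hP hac
  exact div_le_one_of_le₀ (log_le_log (by linarith) (hellingerSum_vecMul_le hα.le hμ.1 hν.1 hac hP))
    (pos_of_mul_pos_right h0 (one_div_pos.2 (sub_pos.2 hα)).le).le

theorem divRatio_rtalphaE_vecMul_le_divRatio_dtalphaE_vecMul {β : ℝ} (hβ₀ : 0 ≤ β) (hβ₁ : β < 1)
    (hP : IsTransMat P) (hμ : IsProb μ) (hν : IsProb ν) (h0 : 0 < RtalphaE β μ ν) :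
    0 < DtalphaE β μ ν ∧ DtalphaE β μ ν ≠ ⊤ ∧
      divRatio (RtalphaE β (vecMul μ P) (vecMul ν P)) (RtalphaE β μ ν) ≤
        divRatio (DtalphaE β (vecMul μ P) (vecMul ν P)) (DtalphaE β μ ν) := by
  rw [rtalphaE_eq_coe hβ₁.ne hμ.1 hν.1 (.inl hβ₁.le), EReal.coe_pos] at h0
  rw [divRatio_dtalphaE_vecMul hμ.1 hν.1 hP hβ₁.ne (.inl hβ₁.le),
    divRatio_rtalphaE_vecMul hμ.1 hν.1 hP hβ₁.ne (.inl hβ₁.le),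
    dtalphaE_eq_coe hμ.1 hν.1 (.inl hβ₁.le), EReal.coe_pos, EReal.coe_le_coe_iff]
  have hc : 1 / (β - 1) < 0 := one_div_neg.2 (sub_neg.2 hβ₁)
  have hlog : log (hellingerSum β μ ν) < 0 := neg_of_mul_pos_right h0 hc.le
  have hS₀ : 0 < hellingerSum β μ ν :=
    (hellingerSum_nonneg hμ.1 hν.1).lt_of_ne fun h => by simp [← h] at hlog
  have hS₁ : hellingerSum β μ ν < 1 := (log_neg_iff hS₀).1 hlog
  exact ⟨mul_pos_of_neg_of_neg hc (by linarith), EReal.coe_ne_top _,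
    log_div_log_le_sub_one_div_sub_one hS₀
      (hellingerSum_le_hellingerSum_vecMul hβ₀ hβ₁.le hμ.1 hν.1 hP)
      (hellingerSum_le_one hβ₀ hβ₁.le (hμ.vecMul hP) (hν.vecMul hP)) hS₁⟩

end Contraction

end

section JointDistribution

variable {X : Type*} [Fintype X] {π : X → ℝ} {α : ℝ} {P : X → X → ℝ}

def jointDist (π : X → ℝ) (M : X → X → ℝ) : X × X → ℝ := fun p => π p.1 * M p.1 p.2

def sndKernel [DecidableEq X] (P : X → X → ℝ) : X × X → X × X → ℝ :=
  fun p q => if q.1 = p.1 then P p.2 q.2 else 0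

lemma sndKernel_isTransMat [DecidableEq X] (hP : IsTransMat P) : IsTransMat (sndKernel P) := by
  refine ⟨fun p q => ?_, fun p => ?_⟩
  · unfold sndKernel
    split_ifs
    exacts [hP.1 _ _, le_rfl]
  · simp [sndKernel, Fintype.sum_prod_type, hP.2 p.2]

lemma jointDist_isProb (hπ : ∀ x, 0 < π x) (hπ1 : ∑ x, π x = 1) {M : X → X → ℝ}
    (hM : IsTransMat M) : IsProb (jointDist π M) := by
  refine ⟨fun p => mul_nonneg (hπ p.1).le (hM.1 _ _), ?_⟩
  simp [jointDist, Fintype.sum_prod_type, ← mul_sum, hM.2, hπ1]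

lemma jointDist_matMul [DecidableEq X] (π : X → ℝ) (M P : X → X → ℝ) :
    jointDist π (matMul M P) = vecMul (jointDist π M) (sndKernel P) := by
  funext p
  simp [jointDist, matMul, vecMul, sndKernel, Fintype.sum_prod_type, mul_sum, mul_assoc]

lemma dalphaSumE_eq_dtalphaSumE_jointDist (hπ : ∀ x, 0 < π x) (M L : X → X → ℝ) :
    DalphaSumE π α M L = DtalphaSumE α (jointDist π M) (jointDist π L) := by
  rw [DalphaSumE, DtalphaSumE, Fintype.sum_prod_type]
  refine sum_congr rfl fun x _ => sum_congr rfl fun y _ => ?_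
  have hπx := (hπ x).ne'
  simp [jointDist, hπx, mul_div_mul_left _ _ hπx]

lemma dalphaE_eq_dtalphaE_jointDist (hπ : ∀ x, 0 < π x) (M L : X → X → ℝ) :
    DalphaE π α M L = DtalphaE α (jointDist π M) (jointDist π L) := by
  rw [DalphaE, DtalphaE, dalphaSumE_eq_dtalphaSumE_jointDist hπ]

lemma ralphaE_eq_rtalphaE_jointDist (hπ : ∀ x, 0 < π x) (M L : X → X → ℝ) :
    RalphaE π α M L = RtalphaE α (jointDist π M) (jointDist π L) := by
  rw [RalphaE, RtalphaE, dalphaE_eq_dtalphaE_jointDist hπ]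

lemma etaD_eq_contractionCoeff (hπ : ∀ x, 0 < π x) :
    etaD π α P = contractionCoeff IsTransMat
      (fun M L => DtalphaE α (jointDist π M) (jointDist π L)) (matMul · P) := by
  simp only [etaD, dalphaE_eq_dtalphaE_jointDist hπ]
  rfl

lemma etaR_eq_contractionCoeff (hπ : ∀ x, 0 < π x) :
    etaR π α P = contractionCoeff IsTransMat
      (fun M L => RtalphaE α (jointDist π M) (jointDist π L)) (matMul · P) := by
  simp only [etaR, ralphaE_eq_rtalphaE_jointDist hπ]
  rfl

lemma etaTD_eq_contractionCoeff : etaTD α P = contractionCoeff IsProb (DtalphaE α) (vecMul · P) :=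
  rfl

lemma etaTR_eq_contractionCoeff : etaTR α P = contractionCoeff IsProb (RtalphaE α) (vecMul · P) :=
  rfl

end JointDistribution

theorem stmt13_general {X : Type*} [Fintype X]
    (π : X → ℝ) (hπ : ∀ x, 0 < π x) (hπ1 : ∑ x, π x = 1)
    (P : X → X → ℝ) (hP : IsTransMat P) :
    (∀ α : ℝ, 1 < α →
      etaTD α P ≤ etaTR α P ∧ etaTR α P ≤ (1 : EReal) ∧
      etaD π α P ≤ etaR π α P ∧ etaR π α P ≤ (1 : EReal)) ∧
    (∀ β : ℝ, β ∈ Set.Ioo (0 : ℝ) 1 →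
      etaTR β P ≤ etaTD β P ∧ etaR π β P ≤ etaD π β P) := by
  classical
  have hQ := sndKernel_isTransMat hP
  have hjoint {M} := jointDist_isProb hπ hπ1 (M := M)
  simp only [etaTD_eq_contractionCoeff, etaTR_eq_contractionCoeff, etaD_eq_contractionCoeff hπ,
    etaR_eq_contractionCoeff hπ]
  refine ⟨fun α hα => ⟨?_, ?_, ?_, ?_⟩, fun β ⟨hβ₀, hβ₁⟩ => ⟨?_, ?_⟩⟩
  · exact contractionCoeff_le_contractionCoeff fun μ ν hμ hν =>
      divRatio_dtalphaE_vecMul_le_divRatio_rtalphaE_vecMul hα hP hμ hν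
  · exact contractionCoeff_le_one fun μ ν hμ hν => divRatio_rtalphaE_vecMul_le_one hα hP hμ hν
  · refine contractionCoeff_le_contractionCoeff fun M L hM hL => ?_
    simp only [jointDist_matMul]
    exact divRatio_dtalphaE_vecMul_le_divRatio_rtalphaE_vecMul hα hQ (hjoint hM) (hjoint hL)
  · refine contractionCoeff_le_one fun M L hM hL => ?_
    simp only [jointDist_matMul]
    exact divRatio_rtalphaE_vecMul_le_one hα hQ (hjoint hM) (hjoint hL)
  · exact contractionCoeff_le_contractionCoeff fun μ ν hμ hν h0 _ =>
      divRatio_rtalphaE_vecMul_le_divRatio_dtalphaE_vecMul hβ₀.le hβ₁ hP hμ hν h0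
  · refine contractionCoeff_le_contractionCoeff fun M L hM hL h0 _ => ?_
    simp only [jointDist_matMul]
    exact divRatio_rtalphaE_vecMul_le_divRatio_dtalphaE_vecMul hβ₀.le hβ₁ hQ (hjoint hM)
      (hjoint hL) h0

/-- Bounds among the α-divergence and Rényi ergodicity coefficients. -/
theorem stmt13 {X : Type*} [Fintype X] [Nonempty X]
    (π : X → ℝ) (hπ : ∀ x, 0 < π x) (hπ1 : ∑ x, π x = 1)
    (P : X → X → ℝ) (hP : IsTransMat P) :
    (∀ α : ℝ, 1 < α →
      etaTD α P ≤ etaTR α P ∧ etaTR α P ≤ (1 : EReal) ∧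
      etaD π α P ≤ etaR π α P ∧ etaR π α P ≤ (1 : EReal)) ∧
    (∀ β : ℝ, β ∈ Set.Ioo (0 : ℝ) 1 →
      etaTR β P ≤ etaTD β P ∧ etaR π β P ≤ etaD π β P) :=
  stmt13_general π hπ hπ1 P hP
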